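/- arXiv:1407.0216 — 3 statements merged into one kernel-verified Lean document; each statement's English description precedes it below -/
import Mathlib

section
/- If q ∈ L¹[0,1] is not a.e. zero and ρ(m) = max( sup_x |∫₀ˣ q(t)e^{−4πimt}dt|, sup_x |∫₀ˣ q(t)e^{4πimt}dt| ), then there exist C > 0 and N such that ρ(m) > C/m for all m ≥ N. -/
open MeasureTheory Real Set

/-!
With `F(x) = ∫₀ˣ q(t) e^{-ct} dt` and `c = 4πim`, integration by parts (Fubini on the triangle
`t ≤ s`) gives `∫₀ˣ q = F(x) e^{cx} - c ∫₀ˣ e^{cs} F(s) ds`. Since `|e^{cs}| = 1`, this yields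
`‖∫₀ˣ q‖ ≤ (1 + 4πm) ρ(m)`, and choosing `x` with `∫₀ˣ q ≠ 0` gives `ρ(m) ≳ 1/m`.
-/

theorem integral_mul_integral_swap_triangle {𝕜 : Type*} [RCLike 𝕜] {f g : ℝ → 𝕜} {a b : ℝ}
    (hab : a ≤ b) (hf : IntegrableOn f (Ioc a b)) (hg : IntegrableOn g (Ioc a b)) :
    ∫ s in a..b, g s * ∫ t in a..s, f t = ∫ t in a..b, f t * ∫ s in t..b, g s := by
  set k : ℝ × ℝ → 𝕜 := {p : ℝ × ℝ | p.2 ≤ p.1}.indicator fun p => g p.1 * f p.2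
  have hk : Integrable k ((volume.restrict (Ioc a b)).prod (volume.restrict (Ioc a b))) :=
    (hg.mul_prod hf).indicator (measurableSet_le measurable_snd measurable_fst)
  have integral_in_t : ∀ s ∈ Ioc a b, ∫ t in Ioc a b, k (s, t) = g s * ∫ t in a..s, f t := by
    intro s hs
    have : (fun t => k (s, t)) = (Iic s).indicator fun t => g s * f t := by
      ext t; by_cases h : t ≤ s <;> simp [k, h]
    rw [this, setIntegral_indicator measurableSet_Iic, Ioc_inter_Iic, min_eq_right hs.2,
      integral_const_mul, intervalIntegral.integral_of_le hs.1.le]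
  have integral_in_s : ∀ t ∈ Ioc a b, ∫ s in Ioc a b, k (s, t) = f t * ∫ s in t..b, g s := by
    intro t ht
    have : (fun s => k (s, t)) = (Ici t).indicator fun s => g s * f t := by
      ext s; by_cases h : t ≤ s <;> simp [k, h]
    have hset : Ioc a b ∩ Ici t = Icc t b := by
      ext s; simp only [mem_inter_iff, mem_Ioc, mem_Ici, mem_Icc]
      constructor
      · rintro ⟨⟨-, hsb⟩, hts⟩; exact ⟨hts, hsb⟩
      · rintro ⟨hts, hsb⟩; exact ⟨⟨ht.1.trans_le hts, hsb⟩, hts⟩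
    rw [this, setIntegral_indicator measurableSet_Ici, hset, integral_Icc_eq_integral_Ioc,
      integral_mul_const, ← intervalIntegral.integral_of_le ht.2, mul_comm]
  calc ∫ s in a..b, g s * ∫ t in a..s, f t
      = ∫ s in Ioc a b, ∫ t in Ioc a b, k (s, t) := by
        rw [intervalIntegral.integral_of_le hab]
        exact (setIntegral_congr_fun measurableSet_Ioc integral_in_t).symm
    _ = ∫ t in Ioc a b, ∫ s in Ioc a b, k (s, t) := integral_integral_swap hk
    _ = ∫ t in a..b, f t * ∫ s in t..b, g s := by
        rw [intervalIntegral.integral_of_le hab]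
        exact setIntegral_congr_fun measurableSet_Ioc integral_in_s

theorem mul_integral_exp_mul_complex (c : ℂ) (a b : ℝ) :
    c * ∫ s in a..b, Complex.exp (c * s) = Complex.exp (c * b) - Complex.exp (c * a) := by
  rcases eq_or_ne c 0 with rfl | hc
  · simp
  · rw [integral_exp_mul_complex hc, mul_div_cancel₀ _ hc]

theorem integral_eq_integral_mul_exp_sub {q : ℝ → ℂ} {a b : ℝ} (hab : a ≤ b)
    (hq : IntegrableOn q (Ioc a b)) (c : ℂ) :
    ∫ t in a..b, q t = (∫ t in a..b, q t * Complex.exp (-(c * t))) * Complex.exp (c * b)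
      - c * ∫ s in a..b, Complex.exp (c * s) * ∫ t in a..s, q t * Complex.exp (-(c * t)) := by
  have hf : IntegrableOn (fun t => q t * Complex.exp (-(c * t))) (Ioc a b) :=
    hq.mul_continuousOn_of_subset (by fun_prop) measurableSet_Ioc isCompact_Icc
      Ioc_subset_Icc_self
  have hexp : ∀ t, q t * Complex.exp (-(c * t)) * Complex.exp (c * t) = q t := by
    intro t; rw [mul_assoc, ← Complex.exp_add, neg_add_cancel, Complex.exp_zero, mul_one]
  rw [integral_mul_integral_swap_triangle hab hf (by fun_prop : Continuous _).integrableOn_Ioc,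
    ← intervalIntegral.integral_const_mul]
  simp_rw [mul_left_comm c, mul_integral_exp_mul_complex, mul_sub, hexp]
  rw [intervalIntegral.integral_sub
      ((intervalIntegrable_iff_integrableOn_Ioc_of_le hab).2 (hf.mul_const _))
      ((intervalIntegrable_iff_integrableOn_Ioc_of_le hab).2 hq),
    intervalIntegral.integral_mul_const]
  ring

theorem norm_integral_le_of_norm_integral_mul_exp_le {q : ℝ → ℂ} {a b : ℝ} (hab : a ≤ b)
    (hq : IntegrableOn q (Ioc a b)) {c : ℂ} (hc : c.re = 0) {M : ℝ}
    (hM : ∀ y ∈ Icc a b, ‖∫ t in a..y, q t * Complex.exp (-(c * t))‖ ≤ M) :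
    ‖∫ t in a..b, q t‖ ≤ (1 + ‖c‖ * (b - a)) * M := by
  have hexp : ∀ s : ℝ, ‖Complex.exp (c * s)‖ = 1 := fun s => by simp [Complex.norm_exp, hc]
  have hinner : ‖∫ s in a..b, Complex.exp (c * s) * ∫ t in a..s, q t * Complex.exp (-(c * t))‖
      ≤ M * (b - a) := by
    refine (intervalIntegral.norm_integral_le_of_norm_le_const fun s hs => ?_).trans_eq
      (by rw [abs_of_nonneg (sub_nonneg.2 hab)])
    rw [uIoc_of_le hab] at hs
    rw [norm_mul, hexp, one_mul]
    exact hM s (Ioc_subset_Icc_self hs)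
  rw [integral_eq_integral_mul_exp_sub hab hq c]
  calc _ ≤ ‖(∫ t in a..b, q t * Complex.exp (-(c * t))) * Complex.exp (c * b)‖
        + ‖c * ∫ s in a..b, Complex.exp (c * s) * ∫ t in a..s, q t * Complex.exp (-(c * t))‖ :=
        norm_sub_le _ _
    _ ≤ M + ‖c‖ * (M * (b - a)) := by
        rw [norm_mul, norm_mul, hexp, mul_one]
        gcongr
        exact hM b (right_mem_Icc.2 hab)
    _ = (1 + ‖c‖ * (b - a)) * M := by ring

theorem bddAbove_range_norm_intervalIntegral {E : Type*} [NormedAddCommGroup E] [NormedSpace ℝ E]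
    {f : ℝ → E} {a b : ℝ} (hf : IntegrableOn f (Icc a b)) :
    BddAbove (range fun y : Icc a b => ‖∫ t in a..(y : ℝ), f t‖) := by
  refine ⟨∫ t in Icc a b, ‖f t‖, ?_⟩
  rintro _ ⟨⟨y, hay, hyb⟩, rfl⟩
  refine (intervalIntegral.norm_integral_le_integral_norm_uIoc).trans
    (setIntegral_mono_set hf.norm (ae_of_all _ fun t => norm_nonneg _) ?_)
  rw [uIoc_of_le hay]
  exact (Ioc_subset_Icc_self.trans (Icc_subset_Icc_right hyb)).eventuallyLE

/-- Inequality (rhoineq): if `q ∈ L¹[0,1]` is not a.e. zero (some partial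
integral is nonzero), then `ρ(m) > C/m` for all large `m`. -/
theorem stmt_3 (q : ℝ → ℂ) (hq : IntegrableOn q (Set.Icc 0 1))
    (hne : ∃ x ∈ Set.Icc (0:ℝ) 1, (∫ t in (0:ℝ)..x, q t) ≠ 0)
    (ρ : ℕ → ℝ)
    (hρ : ∀ m : ℕ, ρ m =
      max (⨆ x : Set.Icc (0:ℝ) 1,
            ‖∫ t in (0:ℝ)..(x:ℝ), q t * Complex.exp (-(4 * Real.pi * m * t) * Complex.I)‖)
          (⨆ x : Set.Icc (0:ℝ) 1,
            ‖∫ t in (0:ℝ)..(x:ℝ), q t * Complex.exp ((4 * Real.pi * m * t) * Complex.I)‖)) :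
    ∃ C > 0, ∃ N : ℕ, ∀ m ≥ N, ρ m > C / m := by
  obtain ⟨x₀, hx₀, hG⟩ := hne
  have hG_pos : 0 < ‖∫ t in (0:ℝ)..x₀, q t‖ := norm_pos_iff.2 hG
  refine ⟨‖∫ t in (0:ℝ)..x₀, q t‖ / (2 * (1 + 4 * π)), by positivity, 1, fun m hm => ?_⟩
  have hm1 : (1 : ℝ) ≤ m := by exact_mod_cast hm
  set c : ℂ := 4 * π * m * Complex.I
  have hc_norm : ‖c‖ = 4 * π * m := by simp [c, abs_of_pos pi_pos]
  have hρ_bound : ∀ y ∈ Icc 0 x₀, ‖∫ t in (0:ℝ)..y, q t * Complex.exp (-(c * t))‖ ≤ ρ m := by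
    intro y hy
    have hint : ∀ t : ℝ, -(c * t) = -(4 * π * m * t) * Complex.I := fun t => by ring
    simp_rw [hint, hρ m]
    refine le_max_of_le_left (le_ciSup_of_le (bddAbove_range_norm_intervalIntegral ?_)
      ⟨y, hy.1, hy.2.trans hx₀.2⟩ le_rfl)
    exact hq.mul_continuousOn (by fun_prop) isCompact_Icc
  have key := norm_integral_le_of_norm_integral_mul_exp_le hx₀.1
    (hq.mono_set (Ioc_subset_Icc_self.trans (Icc_subset_Icc_right hx₀.2))) (by simp [c]) hρ_bound
  rw [hc_norm, sub_zero] at key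
  have hρ_pos : 0 < ρ m :=
    pos_of_mul_pos_right (hG_pos.trans_le key) (by have := hx₀.1; positivity)
  have hx_le : 4 * π * m * x₀ ≤ 4 * π * m := mul_le_of_le_one_right (by positivity) hx₀.2
  rw [gt_iff_lt, div_div, div_lt_iff₀ (by positivity)]
  calc ‖∫ t in (0:ℝ)..x₀, q t‖ ≤ (1 + 4 * π * m * x₀) * ρ m := key
    _ ≤ (1 + 4 * π) * m * ρ m := by gcongr; nlinarith [pi_pos]
    _ < ρ m * (2 * (1 + 4 * π) * m) := by nlinarith [pi_pos]
end

section
/- Suppose q ∈ L¹[0,1] with ∫₀¹ q = 0, Q(x) = ∫₀ˣ q(t)dt, Q₀ = ∫₀¹ Q(x)dx, and ρ(m) as in (m-8). Then ∫₀¹ (Q(x)−Q₀)² q(x) e^{−i4πmx} dx → 0 as m → ∞, and in fact this integral is O(ρ(m)). -/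
/-!
Let `F m x = ∫₀ˣ q(t) e^{-4πimt} dt`, so that `‖F m x‖ ≤ ρ m` on `[0,1]`. Since `Q - Q₀` is a
primitive of `q`, its square is `(Q 0 - Q₀)²` plus the primitive of `2 (Q - Q₀) q`, and
integrating by parts against `F m` gives
`∫₀¹ (Q - Q₀)² q e^{-4πimx} = (Q 1 - Q₀)² F m 1 - ∫₀¹ 2 (Q - Q₀) q F m`,
whose norm is at most `(‖Q 1 - Q₀‖² + ‖2 (Q - Q₀) q‖₁) ρ m`. The functions are only absolutely
continuous and complex valued, so integration by parts is obtained from Fubini's theorem on the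
triangle `{t ≤ s}`. The limit `0` is the Riemann–Lebesgue lemma.
-/

open MeasureTheory Real Set Filter Topology

section Primitive

variable {𝕜 : Type*} [RCLike 𝕜] {a b : ℝ} {f g p P : ℝ → 𝕜}

theorem integral_Ioc_mul_integral_Ioc_eq_add (hf : IntegrableOn f (Ioc a b))
    (hg : IntegrableOn g (Ioc a b)) :
    (∫ x in Ioc a b, f x) * (∫ x in Ioc a b, g x) =
      (∫ x in Ioc a b, f x * ∫ t in Ioc a x, g t) +
        ∫ x in Ioc a b, (∫ t in Ioc a x, f t) * g x := by
  set μ := volume.restrict (Ioc a b)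
  have hprod : Integrable (fun z : ℝ × ℝ => f z.1 * g z.2) (μ.prod μ) := hf.mul_prod hg
  have hS : MeasurableSet {z : ℝ × ℝ | z.2 ≤ z.1} := measurableSet_le measurable_snd measurable_fst
  rw [← integral_prod_mul, ← integral_add_compl hS hprod, ← integral_indicator hS,
    ← integral_indicator hS.compl, integral_prod _ (hprod.indicator hS),
    integral_prod_symm _ (hprod.indicator hS.compl)]
  congr 1
  · refine setIntegral_congr_fun measurableSet_Ioc fun x hx => ?_
    have hslice : Iic x ∩ Ioc a b = Ioc a x := by
      ext t; simp only [mem_inter_iff, mem_Iic, mem_Ioc]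
      exact ⟨fun h => ⟨h.2.1, h.1⟩, fun h => ⟨h.2, h.1, h.2.trans hx.2⟩⟩
    have hind : ∀ t, {z : ℝ × ℝ | z.2 ≤ z.1}.indicator (fun z => f z.1 * g z.2) (x, t) =
        (Iic x).indicator (fun t => f x * g t) t := fun t => by
      by_cases h : t ≤ x <;> simp [indicator, h]
    simp_rw [hind]
    rw [integral_indicator measurableSet_Iic, Measure.restrict_restrict measurableSet_Iic, hslice,
      integral_const_mul]
  · refine setIntegral_congr_fun measurableSet_Ioc fun x hx => ?_
    have hslice : Iio x ∩ Ioc a b = Ioo a x := by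
      ext t; simp only [mem_inter_iff, mem_Iio, mem_Ioc, mem_Ioo]
      exact ⟨fun h => ⟨h.2.1, h.1⟩, fun h => ⟨h.2, h.1, (h.2.trans_le hx.2).le⟩⟩
    have hind : ∀ t, {z : ℝ × ℝ | z.2 ≤ z.1}ᶜ.indicator (fun z => f z.1 * g z.2) (t, x) =
        (Iio x).indicator (fun t => f t * g x) t := fun t => by
      by_cases h : t < x <;> simp [indicator, h, not_le.mpr, le_of_not_gt]
    simp_rw [hind]
    rw [integral_indicator measurableSet_Iio, Measure.restrict_restrict measurableSet_Iio, hslice,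
      integral_mul_const, integral_Ioc_eq_integral_Ioo]

namespace intervalIntegral

theorem integral_mul_integral_eq_add (hab : a ≤ b) (hf : IntervalIntegrable f volume a b)
    (hg : IntervalIntegrable g volume a b) :
    (∫ x in a..b, f x) * (∫ x in a..b, g x) =
      (∫ x in a..b, f x * ∫ t in a..x, g t) + ∫ x in a..b, (∫ t in a..x, f t) * g x := by
  have hprim : ∀ h : ℝ → 𝕜, ∀ x ∈ Ioc a b, ∫ t in a..x, h t = ∫ t in Ioc a x, h t :=
    fun h x hx => integral_of_le hx.1.le
  have hfG : ∫ x in Ioc a b, f x * ∫ t in a..x, g t = ∫ x in Ioc a b, f x * ∫ t in Ioc a x, g t :=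
    setIntegral_congr_fun measurableSet_Ioc fun x hx => by rw [hprim g x hx]
  have hFg : ∫ x in Ioc a b, (∫ t in a..x, f t) * g x =
      ∫ x in Ioc a b, (∫ t in Ioc a x, f t) * g x :=
    setIntegral_congr_fun measurableSet_Ioc fun x hx => by rw [hprim f x hx]
  simp only [integral_of_le hab]
  rw [hfG, hFg]
  exact integral_Ioc_mul_integral_Ioc_eq_add hf.1 hg.1

theorem continuousOn_of_eq_add_primitive (hab : a ≤ b) (hp : IntervalIntegrable p volume a b)
    (hP : ∀ x ∈ Icc a b, P x = P a + ∫ t in a..x, p t) : ContinuousOn P (Icc a b) := by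
  rw [← uIcc_of_le hab] at hP ⊢
  exact (continuousOn_const.add (continuousOn_primitive_interval' hp left_mem_uIcc)).congr hP

theorem integral_mul_eq_sub_of_eq_add_primitive (hab : a ≤ b)
    (hp : IntervalIntegrable p volume a b) (hg : IntervalIntegrable g volume a b)
    (hP : ∀ x ∈ Icc a b, P x = P a + ∫ t in a..x, p t) :
    ∫ x in a..b, P x * g x = P b * (∫ x in a..b, g x) - ∫ x in a..b, p x * ∫ t in a..x, g t := by
  have hsplit : ∫ x in a..b, P x * g x =
      ∫ x in a..b, (P a * g x + (∫ t in a..x, p t) * g x) :=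
    integral_congr fun x hx => by rw [hP x (uIcc_of_le hab ▸ hx), add_mul]
  rw [hsplit, integral_add (hg.const_mul _)
      (hg.continuousOn_mul (continuousOn_primitive_interval' hp left_mem_uIcc)),
    integral_const_mul, hP b (right_mem_Icc.mpr hab)]
  linear_combination -integral_mul_integral_eq_add hab hp hg

theorem sq_eq_add_integral_of_eq_add_primitive (hab : a ≤ b)
    (hp : IntervalIntegrable p volume a b) (hP : ∀ x ∈ Icc a b, P x = P a + ∫ t in a..x, p t) :
    P b ^ 2 = P a ^ 2 + ∫ x in a..b, 2 * P x * p x := by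
  have hPp : IntervalIntegrable (fun x => P x * p x) volume a b :=
    hp.continuousOn_mul ((uIcc_of_le hab).symm ▸ continuousOn_of_eq_add_primitive hab hp hP)
  have hprim : ∫ x in a..b, p x * ∫ t in a..x, p t = ∫ x in a..b, (P x * p x - P a * p x) :=
    integral_congr fun x hx => by rw [hP x (uIcc_of_le hab ▸ hx)]; ring
  have hparts := integral_mul_eq_sub_of_eq_add_primitive hab hp hp hP
  rw [hprim, integral_sub hPp (hp.const_mul _), integral_const_mul] at hparts
  have hb := hP b (right_mem_Icc.mpr hab)
  simp_rw [mul_assoc, integral_const_mul]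
  linear_combination -hparts + (P b + P a) * hb

theorem norm_integral_mul_le_of_eq_add_primitive (hab : a ≤ b)
    (hp : IntervalIntegrable p volume a b) (hg : IntervalIntegrable g volume a b)
    (hP : ∀ x ∈ Icc a b, P x = P a + ∫ t in a..x, p t) {M : ℝ}
    (hM : ∀ x ∈ Icc a b, ‖∫ t in a..x, g t‖ ≤ M) :
    ‖∫ x in a..b, P x * g x‖ ≤ (‖P b‖ + ∫ x in a..b, ‖p x‖) * M := by
  have hb : b ∈ Icc a b := right_mem_Icc.mpr hab
  have hrem : ‖∫ x in a..b, p x * ∫ t in a..x, g t‖ ≤ ∫ x in a..b, ‖p x‖ * M :=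
    norm_integral_le_of_norm_le hab (Eventually.of_forall fun x hx => by
      rw [norm_mul]
      exact mul_le_mul_of_nonneg_left (hM x (Ioc_subset_Icc_self hx)) (norm_nonneg _))
      (hp.norm.mul_const M)
  rw [integral_mul_eq_sub_of_eq_add_primitive hab hp hg hP, add_mul, ← integral_mul_const]
  refine (norm_sub_le _ _).trans (add_le_add ?_ hrem)
  rw [norm_mul]
  exact mul_le_mul_of_nonneg_left (hM b hb) (norm_nonneg _)

end intervalIntegral

end Primitive

theorem intervalIntegral.norm_integral_le_ciSup {E : Type*} [NormedAddCommGroup E]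
    [NormedSpace ℝ E] {f : ℝ → E} {a b x : ℝ} (hf : IntervalIntegrable f volume a b)
    (hx : x ∈ Icc a b) : ‖∫ t in a..x, f t‖ ≤ ⨆ y : Icc a b, ‖∫ t in a..(y : ℝ), f t‖ := by
  refine le_ciSup (f := fun y : Icc a b => ‖∫ t in a..(y : ℝ), f t‖)
    ⟨∫ t in a..b, ‖f t‖, ?_⟩ ⟨x, hx⟩
  rintro _ ⟨y, rfl⟩
  exact (norm_integral_le_integral_norm y.2.1).trans <| integral_mono_interval le_rfl y.2.1 y.2.2
    (Eventually.of_forall fun t => norm_nonneg (f t)) hf.norm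

theorem intervalIntegral.tendsto_integral_mul_exp_cocompact (f : ℝ → ℂ) (a b : ℝ) :
    Tendsto (fun ξ : ℝ => ∫ x in a..b, f x * Complex.exp (-(2 * π * ξ * x) * Complex.I))
      (cocompact ℝ) (𝓝 0) := by
  have hset : ∀ s : Set ℝ, MeasurableSet s → Tendsto
      (fun ξ : ℝ => ∫ x in s, f x * Complex.exp (-(2 * π * ξ * x) * Complex.I))
      (cocompact ℝ) (𝓝 0) := fun s hs => by
    refine (Real.tendsto_integral_exp_smul_cocompact (s.indicator f)).congr fun ξ => ?_
    rw [← MeasureTheory.integral_indicator hs]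
    congr 1 with x
    by_cases hx : x ∈ s
    · simp only [indicator_of_mem hx, Circle.smul_def, Real.fourierChar_apply, smul_eq_mul]
      push_cast
      ring_nf
    · simp [indicator_of_notMem hx]
  simpa [intervalIntegral] using (hset _ measurableSet_Ioc).sub (hset _ measurableSet_Ioc)

theorem stmt_6_general (q : ℝ → ℂ) (hq : IntegrableOn q (Set.Icc 0 1))
    (Q : ℝ → ℂ) (hQ : ∀ x, Q x = ∫ t in (0:ℝ)..x, q t)
    (Q₀ : ℂ)
    (ρ : ℕ → ℝ)
    (hρ : ∀ m : ℕ, ρ m = max (⨆ x : Set.Icc (0:ℝ) 1,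
            ‖∫ t in (0:ℝ)..(x:ℝ), q t * Complex.exp (-(4 * Real.pi * m * t) * Complex.I)‖)
          (⨆ x : Set.Icc (0:ℝ) 1,
            ‖∫ t in (0:ℝ)..(x:ℝ), q t * Complex.exp ((4 * Real.pi * m * t) * Complex.I)‖)) :
    Filter.Tendsto
      (fun m : ℕ => ∫ x in (0:ℝ)..1,
        (Q x - Q₀) ^ 2 * q x * Complex.exp (-(4 * Real.pi * m * x) * Complex.I))
      Filter.atTop (nhds 0) ∧
    ∃ C : ℝ, ∃ N : ℕ, ∀ m ≥ N,
      ‖∫ x in (0:ℝ)..1,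
        (Q x - Q₀) ^ 2 * q x * Complex.exp (-(4 * Real.pi * m * x) * Complex.I)‖ ≤ C * ρ m := by
  have hq01 : IntervalIntegrable q volume 0 1 :=
    (intervalIntegrable_iff_integrableOn_Icc_of_le zero_le_one).mpr hq
  have hQprim : ∀ x ∈ Icc (0:ℝ) 1, Q x - Q₀ = (Q 0 - Q₀) + ∫ t in (0:ℝ)..x, q t := fun x _ => by
    rw [hQ x, hQ 0, intervalIntegral.integral_same]; ring
  have hsq : ∀ x ∈ Icc (0:ℝ) 1,
      (Q x - Q₀) ^ 2 = (Q 0 - Q₀) ^ 2 + ∫ y in (0:ℝ)..x, 2 * (Q y - Q₀) * q y := fun x hx =>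
    intervalIntegral.sq_eq_add_integral_of_eq_add_primitive hx.1
      ((intervalIntegrable_iff_integrableOn_Icc_of_le hx.1).mpr
        (hq.mono_set (Icc_subset_Icc_right hx.2)))
      fun y hy => hQprim y ⟨hy.1, hy.2.trans hx.2⟩
  have hderiv : IntervalIntegrable (fun y => 2 * (Q y - Q₀) * q y) volume 0 1 := by
    have hc := intervalIntegral.continuousOn_of_eq_add_primitive zero_le_one hq01 hQprim
    simpa only [mul_assoc] using
      (hq01.continuousOn_mul (by rwa [uIcc_of_le zero_le_one])).const_mul 2
  have hqe : ∀ m : ℕ, IntervalIntegrable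
      (fun t => q t * Complex.exp (-(4 * π * m * t) * Complex.I)) volume 0 1 := fun m =>
    hq01.mul_continuousOn (by fun_prop)
  have hρ_bound : ∀ m : ℕ, ∀ x ∈ Icc (0:ℝ) 1,
      ‖∫ t in (0:ℝ)..x, q t * Complex.exp (-(4 * π * m * t) * Complex.I)‖ ≤ ρ m :=
    fun m x hx => (intervalIntegral.norm_integral_le_ciSup (hqe m) hx).trans
      (hρ m ▸ le_max_left _ _)
  refine ⟨?_, ‖(Q 1 - Q₀) ^ 2‖ + ∫ y in (0:ℝ)..1, ‖2 * (Q y - Q₀) * q y‖, 0, fun m _ => ?_⟩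
  · have h2m : Tendsto (fun m : ℕ => 2 * (m : ℝ)) atTop (cocompact ℝ) :=
      (tendsto_natCast_atTop_atTop.const_mul_atTop two_pos).mono_right atTop_le_cocompact
    refine ((intervalIntegral.tendsto_integral_mul_exp_cocompact
      (fun x => (Q x - Q₀) ^ 2 * q x) 0 1).comp h2m).congr
      fun m => intervalIntegral.integral_congr fun x _ => ?_
    push_cast
    ring_nf
  · rw [intervalIntegral.integral_congr fun x _ => mul_assoc _ _ _]
    exact intervalIntegral.norm_integral_mul_le_of_eq_add_primitive zero_le_one hderiv (hqe m)
      hsq (hρ_bound m)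

/-- Estimate (I123), first part: `∫₀¹ (Q−Q₀)² q e^{−i4πmx} dx = O(ρ(m))`,
and in particular the integral tends to `0` as `m → ∞`. -/
theorem stmt_6 (q : ℝ → ℂ) (hq : IntegrableOn q (Set.Icc 0 1))
    (hq0 : (∫ t in (0:ℝ)..1, q t) = 0)
    (Q : ℝ → ℂ) (hQ : ∀ x, Q x = ∫ t in (0:ℝ)..x, q t)
    (Q₀ : ℂ) (hQ₀ : Q₀ = ∫ x in (0:ℝ)..1, Q x)
    (ρ : ℕ → ℝ)
    (hρ : ∀ m : ℕ, ρ m = max (⨆ x : Set.Icc (0:ℝ) 1,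
            ‖∫ t in (0:ℝ)..(x:ℝ), q t * Complex.exp (-(4 * Real.pi * m * t) * Complex.I)‖)
          (⨆ x : Set.Icc (0:ℝ) 1,
            ‖∫ t in (0:ℝ)..(x:ℝ), q t * Complex.exp ((4 * Real.pi * m * t) * Complex.I)‖)) :
    Filter.Tendsto
      (fun m : ℕ => ∫ x in (0:ℝ)..1,
        (Q x - Q₀) ^ 2 * q x * Complex.exp (-(4 * Real.pi * m * x) * Complex.I))
      Filter.atTop (nhds 0) ∧
    ∃ C : ℝ, ∃ N : ℕ, ∀ m ≥ N,
      ‖∫ x in (0:ℝ)..1,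
        (Q x - Q₀) ^ 2 * q x * Complex.exp (-(4 * Real.pi * m * x) * Complex.I)‖ ≤ C * ρ m :=
  stmt_6_general q hq Q hQ Q₀ ρ hρ
end

section
/- Let (q_k)_{k∈ℤ} be a bounded sequence of complex numbers. Then for m ≥ 2, the double sum Σ_{m₁,m₂} |q_{m₁} q_{m₂}| / (|m₁||2m−m₁| |m₁+m₂||2m−m₁−m₂|), taken over integers m₁, m₂ with m₁ ≠ 0, m₁+m₂ ≠ 0, m₁ ≠ 2m, m₁+m₂ ≠ 2m, is bounded by C·M²·((log m)/m)² for an absolute constant C, where M = sup_k |q_k|. -/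
open Real Finset

/- Substituting `n₁ = m₁`, `n₂ = m₁ + m₂` turns the double sum into at most
`M² (∑ₙ w(n))²` with `w(n) = 1 / (|n| |2m - n|)`. Partial fractions give
`w(n) = (1/n + 1/(2m - n)) / 2m` for `0 < n < 2m`, and a telescoping series
`(1/|n| - 1/(|n| + 2m)) / 2m` for `n < 0` (and, by the symmetry `n ↦ 2m - n`, for `n > 2m`);
each part is at most a harmonic number `H_{2m} = O(log m)` divided by `2m`. -/

lemma sum_range_sub_shift_le {α : Type*} [AddCommGroup α] [PartialOrder α]
    [IsOrderedAddMonoid α] {g : ℕ → α} (hg : ∀ k, 0 ≤ g k) (N n : ℕ) :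
    ∑ k ∈ range n, (g k - g (k + N)) ≤ ∑ k ∈ range N, g k := by
  have h : ∑ k ∈ range n, g k + ∑ k ∈ range N, g (n + k) =
      ∑ k ∈ range N, g k + ∑ k ∈ range n, g (k + N) := by
    rw [← sum_range_add, add_comm n N, sum_range_add]
    simp only [add_comm N]
  rw [sum_sub_distrib, sub_le_iff_le_add, ← h]
  exact le_add_of_nonneg_right (sum_nonneg fun k _ => hg _)

lemma summable_mul_shear {G : Type*} [AddGroup G] {f g : G → ℝ} (hf : Summable f)
    (hg : Summable g) (hf0 : 0 ≤ f) (hg0 : 0 ≤ g) :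
    Summable fun p : G × G => f p.1 * g (p.1 + p.2) :=
  (hf.mul_of_nonneg hg hf0 hg0).comp_injective
    (Equiv.prodShear (Equiv.refl G) Equiv.addLeft).injective

lemma tsum_mul_shear {G : Type*} [AddGroup G] {f g : G → ℝ} (hf : Summable f)
    (hg : Summable g) (hf0 : 0 ≤ f) (hg0 : 0 ≤ g) :
    ∑' p : G × G, f p.1 * g (p.1 + p.2) = (∑' x, f x) * ∑' y, g y := by
  rw [hf.tsum_mul_tsum hg (hf.mul_of_nonneg hg hf0 hg0)]
  exact Equiv.tsum_eq (Equiv.prodShear (Equiv.refl G) Equiv.addLeft) fun r => f r.1 * g r.2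

lemma harmonic_two_mul_le_four_mul_log {m : ℕ} (hm : 2 ≤ m) :
    (harmonic (2 * m) : ℝ) ≤ 4 * log m := by
  have hlog : log 2 ≤ log m := log_le_log two_pos (by exact_mod_cast hm)
  have h := harmonic_le_one_add_log (2 * m)
  rw [Nat.cast_mul, Nat.cast_two, log_mul two_ne_zero (by positivity)] at h
  linarith [log_two_gt_d9]

/- Since `0⁻¹ = 0`, the weight vanishes at the poles `0` and `N`; this accounts for the pairs
excluded from the double sum. -/
noncomputable def twoPoleWeight (N : ℕ) (n : ℤ) : ℝ := (|(n : ℝ)| * |(N : ℝ) - n|)⁻¹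

section TwoPoleWeight

variable {N : ℕ}

lemma twoPoleWeight_nonneg (N : ℕ) : 0 ≤ twoPoleWeight N :=
  fun _ => by unfold twoPoleWeight; positivity

lemma twoPoleWeight_sub (N : ℕ) (n : ℤ) : twoPoleWeight N (N - n) = twoPoleWeight N n := by
  simp only [twoPoleWeight, Int.cast_sub, Int.cast_natCast, sub_sub_cancel, mul_comm]

lemma twoPoleWeight_natCast_add (N k : ℕ) :
    twoPoleWeight N ((k + (N + 1) : ℕ) : ℤ) = twoPoleWeight N (-(k + 1)) := by
  rw [← twoPoleWeight_sub]
  congr 1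
  push_cast
  ring

lemma twoPoleWeight_mul_twoPoleWeight_add (N : ℕ) (a b : ℤ) :
    twoPoleWeight N a * twoPoleWeight N (a + b) =
      (|(a : ℝ)| * |(N : ℝ) - a| * |(a : ℝ) + b| * |(N : ℝ) - a - b|)⁻¹ := by
  simp only [twoPoleWeight, Int.cast_add, sub_add_eq_sub_sub, mul_inv, mul_assoc]

lemma twoPoleWeight_neg_succ (hN : N ≠ 0) (k : ℕ) :
    twoPoleWeight N (-(k + 1)) = (((k + 1 : ℕ) : ℝ)⁻¹ - ((k + N + 1 : ℕ) : ℝ)⁻¹) / N := by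
  have hN' : (0 : ℝ) < N := by positivity
  unfold twoPoleWeight
  push_cast
  rw [abs_of_neg (by linarith), abs_of_pos (by linarith), neg_neg, sub_neg_eq_add,
    add_left_comm, ← add_assoc]
  have h1 : (k : ℝ) + 1 ≠ 0 := by positivity
  have h2 : (k : ℝ) + N + 1 ≠ 0 := by positivity
  field_simp
  ring

-- Partial fractions; an equality for `0 < k < N`.
lemma twoPoleWeight_natCast_le {k : ℕ} (hk : k ≤ N) :
    twoPoleWeight N k ≤ ((k : ℝ)⁻¹ + ((N - k : ℕ) : ℝ)⁻¹) / N := by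
  rcases Nat.eq_zero_or_pos k with rfl | hk0
  · simp only [twoPoleWeight, Int.cast_zero, CharP.cast_eq_zero, abs_zero, zero_mul, inv_zero]
    positivity
  rcases hk.eq_or_lt with rfl | hkN
  · simp only [twoPoleWeight, Int.cast_natCast, sub_self, abs_zero, mul_zero, inv_zero]
    positivity
  have hk' : (0 : ℝ) < k := by exact_mod_cast hk0
  have hkN' : (0 : ℝ) < N - k := by rw [sub_pos]; exact_mod_cast hkN
  apply le_of_eq
  unfold twoPoleWeight
  rw [Int.cast_natCast, Nat.cast_sub hk, abs_of_pos hk', abs_of_pos hkN']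
  have hN' : (N : ℝ) ≠ 0 := by linarith
  field_simp
  ring

lemma sum_range_twoPoleWeight_neg_succ_le (hN : N ≠ 0) (n : ℕ) :
    ∑ k ∈ range n, twoPoleWeight N (-(k + 1)) ≤ harmonic N / N := by
  simp_rw [twoPoleWeight_neg_succ hN, ← sum_div]
  gcongr
  have h := sum_range_sub_shift_le (g := fun k => ((k + 1 : ℕ) : ℝ)⁻¹) (fun _ => by positivity) N n
  simpa [harmonic] using h

lemma sum_range_twoPoleWeight_natCast_le (N : ℕ) :
    ∑ k ∈ range (N + 1), twoPoleWeight N k ≤ 2 * harmonic N / N := by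
  have hH : ∑ k ∈ range (N + 1), (k : ℝ)⁻¹ = harmonic N := by
    simp [harmonic, sum_range_succ']
  have hH' : ∑ k ∈ range (N + 1), ((N - k : ℕ) : ℝ)⁻¹ = harmonic N := by
    rw [← hH, ← sum_range_reflect (fun k => (k : ℝ)⁻¹)]
    refine sum_congr rfl fun k _ => ?_
    rw [Nat.add_sub_cancel]
  calc ∑ k ∈ range (N + 1), twoPoleWeight N k
      ≤ ∑ k ∈ range (N + 1), ((k : ℝ)⁻¹ + ((N - k : ℕ) : ℝ)⁻¹) / N :=
        sum_le_sum fun k hk => twoPoleWeight_natCast_le (Nat.lt_succ_iff.1 (mem_range.1 hk))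
    _ = 2 * harmonic N / N := by rw [← sum_div, sum_add_distrib, hH, hH', two_mul]

lemma summable_twoPoleWeight_neg_succ (hN : N ≠ 0) :
    Summable fun k : ℕ => twoPoleWeight N (-(k + 1)) :=
  summable_of_sum_range_le (fun _ => twoPoleWeight_nonneg N _)
    (sum_range_twoPoleWeight_neg_succ_le hN)

lemma summable_twoPoleWeight_natCast (hN : N ≠ 0) :
    Summable fun k : ℕ => twoPoleWeight N k :=
  (summable_nat_add_iff (N + 1)).1 <| by
    simpa only [← Nat.cast_add, twoPoleWeight_natCast_add] using
      summable_twoPoleWeight_neg_succ hN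

lemma summable_twoPoleWeight (hN : N ≠ 0) : Summable (twoPoleWeight N) :=
  .of_nat_of_neg_add_one (summable_twoPoleWeight_natCast hN) (summable_twoPoleWeight_neg_succ hN)

lemma tsum_twoPoleWeight_le (hN : N ≠ 0) : ∑' n, twoPoleWeight N n ≤ 4 * harmonic N / N := by
  have hnat := summable_twoPoleWeight_natCast hN
  rw [tsum_of_nat_of_neg_add_one hnat (summable_twoPoleWeight_neg_succ hN),
    ← hnat.sum_add_tsum_nat_add (N + 1)]
  simp only [twoPoleWeight_natCast_add]
  have hmid := sum_range_twoPoleWeight_natCast_le N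
  have htail := Real.tsum_le_of_sum_range_le (fun _ => twoPoleWeight_nonneg N _)
    (sum_range_twoPoleWeight_neg_succ_le hN)
  calc _ ≤ 2 * (harmonic N : ℝ) / N + harmonic N / N + harmonic N / N := by
        gcongr
    _ = 4 * harmonic N / N := by ring

end TwoPoleWeight

lemma tsum_twoPoleWeight_two_mul_le {m : ℕ} (hm : 2 ≤ m) :
    ∑' n, twoPoleWeight (2 * m) n ≤ 8 * (log m / m) := by
  have hm' : (0 : ℝ) < m := by positivity
  calc ∑' n, twoPoleWeight (2 * m) n ≤ 4 * harmonic (2 * m) / (2 * m : ℕ) :=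
        tsum_twoPoleWeight_le (by omega)
    _ ≤ 4 * (4 * log m) / (2 * m) := by
        push_cast
        gcongr
        exact_mod_cast harmonic_two_mul_le_four_mul_log hm
    _ = 8 * (log m / m) := by ring

/-- Estimate (m45) for `i = 1`: the double sum
`Σ |q_{m₁}q_{m₂}|/(|m₁||2m−m₁||m₁+m₂||2m−m₁−m₂|) = O(M²((log m)/m)²)`. -/
theorem stmt_9 :
    ∃ C > 0, ∀ (q : ℤ → ℂ) (M : ℝ), (∀ k : ℤ, ‖q k‖ ≤ M) →
      ∀ m : ℕ, 2 ≤ m →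
      (∑' p : ℤ × ℤ,
        if p.1 ≠ 0 ∧ p.1 ≠ 2 * (m : ℤ) ∧ p.1 + p.2 ≠ 0 ∧ p.1 + p.2 ≠ 2 * (m : ℤ) then
          ‖q p.1‖ * ‖q p.2‖ /
            (|(p.1 : ℝ)| * |2 * (m : ℝ) - p.1| * |(p.1 : ℝ) + p.2| * |2 * (m : ℝ) - p.1 - p.2|)
        else 0)
        ≤ C * M ^ 2 * (Real.log m / m) ^ 2 := by
  refine ⟨64, by norm_num, fun q M hq m hm => ?_⟩
  have hM : 0 ≤ M := (norm_nonneg _).trans (hq 0)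
  have hw := summable_twoPoleWeight (N := 2 * m) (by omega)
  have hw0 := twoPoleWeight_nonneg (2 * m)
  have hW := (summable_mul_shear hw hw hw0 hw0).mul_left (M ^ 2)
  have hbound : ∀ p : ℤ × ℤ,
      (if p.1 ≠ 0 ∧ p.1 ≠ 2 * (m : ℤ) ∧ p.1 + p.2 ≠ 0 ∧ p.1 + p.2 ≠ 2 * (m : ℤ) then
          ‖q p.1‖ * ‖q p.2‖ /
            (|(p.1 : ℝ)| * |2 * (m : ℝ) - p.1| * |(p.1 : ℝ) + p.2| * |2 * (m : ℝ) - p.1 - p.2|)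
        else 0) ≤
        M ^ 2 * (twoPoleWeight (2 * m) p.1 * twoPoleWeight (2 * m) (p.1 + p.2)) := by
    intro p
    rw [twoPoleWeight_mul_twoPoleWeight_add, Nat.cast_mul, Nat.cast_two, div_eq_mul_inv, sq]
    split_ifs
    · gcongr <;> exact hq _
    · positivity
  calc _ ≤ ∑' p : ℤ × ℤ,
          M ^ 2 * (twoPoleWeight (2 * m) p.1 * twoPoleWeight (2 * m) (p.1 + p.2)) :=
        Summable.tsum_le_tsum hbound (hW.of_nonneg_of_le (fun p => by positivity) hbound) hW
    _ = M ^ 2 * (∑' n, twoPoleWeight (2 * m) n) ^ 2 := by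
        rw [tsum_mul_left, tsum_mul_shear hw hw hw0 hw0, sq (∑' n, _)]
    _ ≤ M ^ 2 * (8 * (log m / m)) ^ 2 := by
        gcongr
        · exact tsum_nonneg hw0
        · exact tsum_twoPoleWeight_two_mul_le hm
    _ = 64 * M ^ 2 * (log m / m) ^ 2 := by ring
end
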